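/- Let R' be a root system whose Weyl group contains −1, with positive roots R'⁺, and define the cascade E inductively: E₁ is the set of maximal elements of R'⁺ (for the order α ≤ α' iff α' − α is a nonnegative combination of positive roots), and Eᵢ is the set of maximal elements of {α ∈ R'⁺ : ⟨α'^∨, α⟩ = 0 for all α' ∈ E₁ ∪ … ∪ E_{i−1}}; let E = ∪ᵢ Eᵢ. Then for any two distinct α, α' ∈ E one has ⟨α'^∨, α⟩ = 0. -/

import Mathlib

open scoped RealInnerProductSpace

variable {V : Type*} [NormedAddCommGroup V] [InnerProductSpace ℝ V] [FiniteDimensional ℝ V]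

/-- The reflection in the hyperplane orthogonal to `α`. -/
noncomputable def wrefl (α : V) : V ≃ₗᵢ[ℝ] V := Submodule.reflection (ℝ ∙ α)ᗮ

/-- A (reduced) root system in a real inner product space. -/
structure IsRootSystem (R : Finset V) : Prop where
  ne_zero : (0 : V) ∉ R
  span_eq_top : Submodule.span ℝ (R : Set V) = ⊤
  reduced : ∀ α ∈ R, ∀ c : ℝ, c • α ∈ R → c = 1 ∨ c = -1
  refl_mem : ∀ α ∈ R, ∀ β ∈ R, wrefl α β ∈ R
  pairing_int : ∀ α ∈ R, ∀ β ∈ R, ∃ n : ℤ, 2 * ⟪α, β⟫ / ⟪α, α⟫ = (n : ℝ)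

/-- The Weyl group of a root system, as a group of linear isometries. -/
noncomputable def weylGroup (R : Finset V) : Subgroup (V ≃ₗᵢ[ℝ] V) :=
  Subgroup.closure (wrefl '' (R : Set V))

/-- A system of positive roots. -/
structure IsPositiveSystem (R Rpos : Finset V) : Prop where
  subset : Rpos ⊆ R
  mem_or_neg_mem : ∀ α ∈ R, α ∈ Rpos ∨ -α ∈ Rpos
  not_mem_and_neg_mem : ∀ α ∈ Rpos, -α ∉ Rpos
  add_mem : ∀ α ∈ Rpos, ∀ β ∈ Rpos, α + β ∈ R → α + β ∈ Rpos

/-- A simple (indecomposable) positive root. -/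
def IsSimpleRoot (Rpos : Finset V) (α : V) : Prop :=
  α ∈ Rpos ∧ ¬∃ β ∈ Rpos, ∃ γ ∈ Rpos, α = β + γ

/-- The length of `w`, i.e. the number of positive roots sent by `w` to negative roots. -/
noncomputable def len (Rpos : Finset V) (w : V ≃ₗᵢ[ℝ] V) : ℕ := by
  classical exact (Rpos.filter fun α => w α ∉ Rpos).card

/-- The coroot attached to a root. -/
noncomputable def cv (α : V) : V := (2 / ⟪α, α⟫) • α

/-- The dominance order: `α ≤ α'` iff `α' - α` is a nonnegative combination of
positive roots. -/
def rle (Rpos : Finset V) (α α' : V) : Prop :=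
  ∃ c : V → ℝ, (∀ β, 0 ≤ c β) ∧ α' - α = ∑ β ∈ Rpos, c β • β

/-- `α` is maximal in `S` for the dominance order. -/
def IsMaxIn (Rpos : Finset V) (S : Set V) (α : V) : Prop :=
  α ∈ S ∧ ∀ α' ∈ S, rle Rpos α α' → rle Rpos α' α

/-- The `n`-th layer of Kostant's cascade: the maximal positive roots among those
orthogonal to all roots of the previous layers. -/
def cascadeLevel (Rpos : Finset V) : ℕ → Set V
  | n =>
    {α | IsMaxIn Rpos
      {β | β ∈ Rpos ∧ ∀ m, m < n → ∀ γ ∈ cascadeLevel Rpos m, ⟪γ, β⟫ = 0} α}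
  termination_by n => n

/-- Kostant's cascade of orthogonal roots. -/
def cascade (Rpos : Finset V) : Set V := ⋃ n, cascadeLevel Rpos n

/-- The set of positive roots on which an involution `w` acts by `-1`. -/
noncomputable def posNegSet (Rpos : Finset V) (w : V ≃ₗᵢ[ℝ] V) : Finset V := by
  classical exact Rpos.filter fun α => w α = -α

/-- The element `r_w`: the sum of the coroots of the cascade of the root system
`R_w = {α ∈ R : w α = -α}`. -/
noncomputable def rInv (Rpos : Finset V) (w : V ≃ₗᵢ[ℝ] V) : V :=
  ∑ α ∈ posNegSet Rpos w, Set.indicator (cascade (posNegSet Rpos w)) cv α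

/-!
Two distinct maximal elements `α, β` of a set `S` of positive roots closed under addition are
orthogonal: if `⟪α, β⟫ < 0` then `α + β ∈ S` lies above `α`, and if `⟪α, β⟫ > 0` then `α - β` or
`β - α` is a positive root, so `α` and `β` are comparable. Each layer of the cascade is the set of
maximal elements of such an `S`, and is orthogonal to the earlier layers by construction.

Comparability contradicts maximality because the dominance order is antisymmetric: no nonzero
nonnegative real combination of positive roots vanishes. In a multiset of positive roots summing
to zero, two members with negative inner product merge into their sum, again a positive root,
which shortens the multiset. For real coefficients, moving the smaller of the two coefficients
onto the sum turns a relation of minimal support into another one whose support has the same size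
and a sum larger by a positive root; by the integral case this cannot go on forever among the
finitely many supports.
-/

theorem Set.Finite.exists_forall_add_notMem {G : Type*} [AddCancelCommMonoid G] {P S : Set G}
    (hP : ∀ M : Multiset G, (∀ x ∈ M, x ∈ P) → M.sum = 0 → M = 0)
    (hS : S.Finite) (hne : S.Nonempty) : ∃ s ∈ S, ∀ p ∈ P, s + p ∉ S := by
  let above : G → G → Prop := fun a b => ∃ M : Multiset G, M ≠ 0 ∧ (∀ x ∈ M, x ∈ P) ∧ a = b + M.sum
  have : IsStrictOrder G above :=
    { irrefl := fun a ⟨M, hM, hMP, h⟩ => hM (hP M hMP (left_eq_add.1 h))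
      trans := fun a b c ⟨M, hM, hMP, hab⟩ ⟨N, _, hNP, hbc⟩ =>
        ⟨N + M, by simp [hM], by simpa [or_imp, forall_and] using ⟨hNP, hMP⟩,
          by rw [hab, hbc, Multiset.sum_add, add_assoc]⟩ }
  obtain ⟨s, hs⟩ := hne
  by_contra! h
  exact (hS.wellFoundedOn (r := above)).induction hs (P := fun _ => False) fun t ht ih => by
    obtain ⟨p, hp, htp⟩ := h t ht
    exact ih _ htp ⟨{p}, Multiset.singleton_ne_zero p, by simpa using hp, by simp⟩

section

omit [FiniteDimensional ℝ V]

theorem wrefl_apply (α β : V) : wrefl α β = β - (2 * ⟪α, β⟫ / ⟪α, α⟫) • α := by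
  rw [wrefl, Submodule.reflection_orthogonal_apply, Submodule.reflection_singleton_apply,
    real_inner_self_eq_norm_sq, mul_div_assoc, two_smul, two_mul, add_smul]
  simp only [RCLike.ofReal_real_eq_id, id_eq]
  abel

namespace IsRootSystem

variable {R : Finset V} (hR : IsRootSystem R)
include hR

theorem inner_self_pos {α : V} (hα : α ∈ R) : 0 < ⟪α, α⟫ :=
  real_inner_self_pos.2 (ne_of_mem_of_not_mem hα hR.ne_zero)

theorem neg_mem {α : V} (hα : α ∈ R) : -α ∈ R := by
  have h := hR.refl_mem α hα α hα
  rwa [wrefl_apply, mul_div_assoc, div_self (hR.inner_self_pos hα).ne', mul_one, two_smul,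
    sub_add_eq_sub_sub, sub_self, zero_sub] at h

theorem inner_mul_inner_lt {α β : V} (hα : α ∈ R) (hβ : β ∈ R) (hne : β ≠ α) (hne' : β ≠ -α) :
    ⟪α, β⟫ * ⟪α, β⟫ < ⟪α, α⟫ * ⟪β, β⟫ := by
  refine (real_inner_mul_inner_self_le α β).lt_of_ne fun h => ?_
  have hα0 : α ≠ 0 := ne_of_mem_of_not_mem hα hR.ne_zero
  have hβ0 : β ≠ 0 := ne_of_mem_of_not_mem hβ hR.ne_zero
  have habs : ‖⟪α, β⟫‖ = ‖α‖ * ‖β‖ := by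
    rw [Real.norm_eq_abs, ← sq_eq_sq₀ (abs_nonneg _) (by positivity), sq_abs, sq, h, mul_pow,
      real_inner_self_eq_norm_sq, real_inner_self_eq_norm_sq]
  obtain ⟨r, -, rfl⟩ := (norm_inner_eq_norm_iff (𝕜 := ℝ) hα0 hβ0).1 habs
  rcases hR.reduced α hα r hβ with rfl | rfl
  · exact hne (one_smul ℝ α)
  · exact hne' (neg_one_smul ℝ α)

theorem add_mem_of_inner_neg {α β : V} (hα : α ∈ R) (hβ : β ∈ R) (hne : β ≠ -α)
    (hneg : ⟪α, β⟫ < 0) : α + β ∈ R := by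
  have hαα := hR.inner_self_pos hα
  have hββ := hR.inner_self_pos hβ
  have hne' : β ≠ α := by rintro rfl; linarith
  obtain ⟨n, hn⟩ := hR.pairing_int α hα β hβ
  obtain ⟨m, hm⟩ := hR.pairing_int β hβ α hα
  rw [real_inner_comm] at hm
  have hn0 : n < 0 := by
    have : (n : ℝ) < 0 := hn ▸ div_neg_of_neg_of_pos (by linarith) hαα
    exact_mod_cast this
  have hm0 : m < 0 := by
    have : (m : ℝ) < 0 := hm ▸ div_neg_of_neg_of_pos (by linarith) hββ
    exact_mod_cast this
  have hnm : n * m < 4 := by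
    have : (n * m : ℝ) < 4 := by
      rw [← hn, ← hm, div_mul_div_comm, div_lt_iff₀ (by positivity)]
      nlinarith [hR.inner_mul_inner_lt hα hβ hne' hne]
    exact_mod_cast this
  -- a Cartan integer `-1` makes the reflection add one root to the other
  obtain rfl | rfl : n = -1 ∨ m = -1 := by
    by_contra! h
    nlinarith [show n ≤ -2 by omega, show m ≤ -2 by omega]
  · have h := hR.refl_mem α hα β hβ
    rw [wrefl_apply, hn] at h
    simpa [add_comm] using h
  · have h := hR.refl_mem β hβ α hα
    rw [wrefl_apply, real_inner_comm, hm] at h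
    simpa using h

end IsRootSystem

theorem rle_of_sub_mem {Rpos : Finset V} {α β : V} (h : β - α ∈ Rpos) : rle Rpos α β := by
  classical exact ⟨fun x => if x = β - α then 1 else 0, fun _ => ite_nonneg zero_le_one le_rfl,
    by simp [h]⟩

namespace IsPositiveSystem

variable {R Rpos : Finset V} (hR : IsRootSystem R) (hP : IsPositiveSystem R Rpos)
include hR hP

theorem add_mem_of_inner_neg {α β : V} (hα : α ∈ Rpos) (hβ : β ∈ Rpos) (hneg : ⟪α, β⟫ < 0) :
    α + β ∈ Rpos :=
  hP.add_mem α hα β hβ <| hR.add_mem_of_inner_neg (hP.subset hα) (hP.subset hβ)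
    (fun h => hP.not_mem_and_neg_mem α hα (h ▸ hβ)) hneg

theorem multiset_eq_zero_of_sum_eq_zero {M : Multiset V} (hM : ∀ x ∈ M, x ∈ Rpos)
    (hsum : M.sum = 0) : M = 0 := by
  classical
  induction hn : Multiset.card M using Nat.strong_induction_on generalizing M with
  | _ n ih =>
  by_contra hM0
  obtain ⟨β, hβM⟩ := Multiset.exists_mem_of_ne_zero hM0
  obtain ⟨M, rfl⟩ := Multiset.exists_cons_of_mem hβM
  have hβ : β ∈ Rpos := hM β (Multiset.mem_cons_self β M)
  rw [Multiset.sum_cons, add_eq_zero_iff_eq_neg'] at hsum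
  obtain ⟨x, hx, hβx⟩ : ∃ x ∈ M, ⟪β, x⟫ < 0 := by
    by_contra! h
    have hnonneg : 0 ≤ ⟪β, M.sum⟫ := by
      rw [← innerₛₗ_apply_apply (𝕜 := ℝ), map_multiset_sum]
      exact Multiset.sum_nonneg (by simpa using h)
    rw [hsum, inner_neg_right] at hnonneg
    linarith [hR.inner_self_pos (hP.subset hβ)]
  refine Multiset.cons_ne_zero (ih (Multiset.card M) (by simp [← hn]) (M := (β + x) ::ₘ M.erase x)
    ?_ ?_ (by simp [Multiset.card_erase_add_one hx]))
  · intro y hy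
    rcases Multiset.mem_cons.1 hy with rfl | hy
    · exact hP.add_mem_of_inner_neg hR hβ (hM x (Multiset.mem_cons_of_mem hx)) hβx
    · exact hM y (Multiset.mem_cons_of_mem (Multiset.mem_of_mem_erase hy))
  · rw [Multiset.sum_cons, add_assoc, Multiset.sum_erase hx, hsum, add_neg_cancel]

end IsPositiveSystem

structure IsNonnegRelation (Rpos : Finset V) (c : V →₀ ℝ) : Prop where
  support_subset : c.support ⊆ Rpos
  nonneg : ∀ x, 0 ≤ c x
  ne_zero : c ≠ 0
  linearCombination_eq_zero : Finsupp.linearCombination ℝ id c = 0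

namespace IsNonnegRelation

variable {R Rpos : Finset V} (hR : IsRootSystem R) (hP : IsPositiveSystem R Rpos)
  {c : V →₀ ℝ} (hc : IsNonnegRelation Rpos c)
include hR hP hc

theorem exists_inner_neg : ∃ u ∈ c.support, ∃ w ∈ c.support, ⟪u, w⟫ < 0 ∧ c u ≤ c w := by
  obtain ⟨δ, hδ⟩ := Finsupp.support_nonempty_iff.2 hc.ne_zero
  obtain ⟨β, hβ, hβδ⟩ : ∃ β ∈ c.support, ⟪β, δ⟫ < 0 := by
    by_contra! h
    have hpos : 0 < ∑ x ∈ c.support, c x * ⟪x, δ⟫ :=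
      Finset.sum_pos' (fun x hx => mul_nonneg (hc.nonneg x) (h x hx))
        ⟨δ, hδ, mul_pos ((hc.nonneg δ).lt_of_ne' (Finsupp.mem_support_iff.1 hδ))
          (hR.inner_self_pos (hP.subset (hc.support_subset hδ)))⟩
    have hzero := congrArg (⟪·, δ⟫) hc.linearCombination_eq_zero
    simp only [Finsupp.linearCombination_apply, Finsupp.sum, sum_inner, real_inner_smul_left,
      id_eq, inner_zero_left] at hzero
    exact hpos.ne' hzero
  rcases le_total (c β) (c δ) with h | h
  · exact ⟨β, hβ, δ, hδ, hβδ, h⟩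
  · exact ⟨δ, hδ, β, hβ, by rwa [real_inner_comm], h⟩

open Finsupp in
theorem exists_support_subset_insert_erase [DecidableEq V] {u w : V} (hu : u ∈ c.support)
    (hw : w ∈ c.support) (huw : ⟪u, w⟫ < 0) (hle : c u ≤ c w) :
    ∃ c', IsNonnegRelation Rpos c' ∧ c'.support ⊆ insert (u + w) (c.support.erase u) := by
  have huR := hc.support_subset hu
  have hwR := hc.support_subset hw
  have hu0 : u ≠ 0 := ne_of_mem_of_not_mem (hP.subset huR) hR.ne_zero
  have hw0 : w ≠ 0 := ne_of_mem_of_not_mem (hP.subset hwR) hR.ne_zero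
  have hwu : w ≠ u := by rintro rfl; linarith [hR.inner_self_pos (hP.subset huR)]
  have hγu : u + w ≠ u := by simpa using hw0
  have hγw : u + w ≠ w := by simpa using hu0
  have ht : 0 < c u := (hc.nonneg u).lt_of_ne' (mem_support_iff.1 hu)
  set c' := c - single u (c u) - single w (c u) + single (u + w) (c u) with hc'
  have hc'u : c' u = 0 := by simp [hc', hwu.symm, hγu.symm]
  have hc'w : c' w = c w - c u := by simp [hc', hwu, hγw.symm]
  have hc'γ : c' (u + w) = c (u + w) + c u := by simp [hc', hγu, hγw]
  have hc'x : ∀ x, x ≠ u → x ≠ w → x ≠ u + w → c' x = c x := by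
    intro x h₁ h₂ h₃
    simp [hc', Ne.symm h₁, Ne.symm h₂, Ne.symm h₃]
  have hsupp : c'.support ⊆ insert (u + w) (c.support.erase u) := by
    intro x hx
    rw [Finset.mem_insert, Finset.mem_erase]
    by_cases h₃ : x = u + w
    · exact .inl h₃
    by_cases h₁ : x = u
    · exact absurd (h₁ ▸ hc'u) (mem_support_iff.1 hx)
    by_cases h₂ : x = w
    · exact .inr ⟨h₁, h₂ ▸ hw⟩
    exact .inr ⟨h₁, by simpa [hc'x x h₁ h₂ h₃] using hx⟩
  refine ⟨c', ⟨?_, fun x => ?_, fun h => ?_, ?_⟩, hsupp⟩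
  · exact hsupp.trans <| Finset.insert_subset (hP.add_mem_of_inner_neg hR huR hwR huw)
      ((Finset.erase_subset _ _).trans hc.support_subset)
  · by_cases h₁ : x = u
    · rw [h₁, hc'u]
    by_cases h₂ : x = w
    · rw [h₂, hc'w]
      linarith
    by_cases h₃ : x = u + w
    · rw [h₃, hc'γ]
      linarith [hc.nonneg (u + w)]
    rw [hc'x x h₁ h₂ h₃]
    exact hc.nonneg x
  · have := congrArg (· (u + w)) h
    simp only [hc'γ, coe_zero, Pi.zero_apply] at this
    linarith [hc.nonneg (u + w)]
  · simp [hc', hc.linearCombination_eq_zero, smul_add]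

theorem exists_card_lt_or_sum_support_eq_add :
    ∃ c', IsNonnegRelation Rpos c' ∧ (c'.support.card < c.support.card ∨
      c'.support.card = c.support.card ∧
        ∃ w ∈ Rpos, ∑ x ∈ c'.support, x = ∑ x ∈ c.support, x + w) := by
  classical
  obtain ⟨u, hu, w, hw, huw, hle⟩ := hc.exists_inner_neg hR hP
  obtain ⟨c', hc', hsupp⟩ := hc.exists_support_subset_insert_erase hR hP hu hw huw hle
  refine ⟨c', hc', ?_⟩
  by_cases hγ : u + w ∈ c.support.erase u
  · rw [Finset.insert_eq_of_mem hγ] at hsupp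
    exact .inl ((Finset.card_le_card hsupp).trans_lt (Finset.card_erase_lt_of_mem hu))
  have hcard : (insert (u + w) (c.support.erase u)).card = c.support.card := by
    rw [Finset.card_insert_of_notMem hγ, Finset.card_erase_add_one hu]
  refine (lt_or_ge _ _).imp_right fun hge => ?_
  have heq := Finset.eq_of_subset_of_card_le hsupp (hcard.trans_le hge)
  refine ⟨heq ▸ hcard, w, hc.support_subset hw, ?_⟩
  rw [heq, Finset.sum_insert hγ, ← Finset.add_sum_erase _ _ hu]
  abel

end IsNonnegRelation

namespace IsPositiveSystem

variable {R Rpos : Finset V} (hR : IsRootSystem R) (hP : IsPositiveSystem R Rpos)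
include hR hP

theorem not_isNonnegRelation (c : V →₀ ℝ) : ¬ IsNonnegRelation Rpos c := by
  classical
  intro hc
  have hex : ∃ n, ∃ c, IsNonnegRelation Rpos c ∧ c.support.card = n := ⟨_, c, hc, rfl⟩
  set S : Set V := {s | ∃ c, IsNonnegRelation Rpos c ∧ c.support.card = Nat.find hex ∧
    ∑ x ∈ c.support, x = s}
  have hS : S.Finite := by
    refine (Rpos.powerset.image fun T => ∑ x ∈ T, x).finite_toSet.subset ?_
    rintro _ ⟨d, hd, -, rfl⟩
    exact Finset.mem_image.2 ⟨d.support, Finset.mem_powerset.2 hd.support_subset, rfl⟩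
  obtain ⟨c₀, hc₀, hcard₀⟩ := Nat.find_spec hex
  obtain ⟨_, ⟨d, hd, hcard, rfl⟩, hmax⟩ :=
    hS.exists_forall_add_notMem (P := Rpos) (fun _ => hP.multiset_eq_zero_of_sum_eq_zero hR)
      ⟨_, c₀, hc₀, hcard₀, rfl⟩
  obtain ⟨d', hd', hlt | ⟨hcard', w, hw, hsum⟩⟩ := hd.exists_card_lt_or_sum_support_eq_add hR hP
  · exact Nat.find_min hex (hcard ▸ hlt) ⟨d', hd', rfl⟩
  · exact hmax w hw ⟨d', hd', hcard'.trans hcard, hsum⟩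

theorem eq_zero_of_sum_smul_eq_zero {c : V → ℝ} (hc : ∀ x, 0 ≤ c x)
    (hsum : ∑ x ∈ Rpos, c x • x = 0) : ∀ x ∈ Rpos, c x = 0 := by
  classical
  let f : V →₀ ℝ := Finsupp.onFinset Rpos (fun x => if x ∈ Rpos then c x else 0)
    fun x hx => by_contra fun h => hx (if_neg h)
  have hf : f = 0 := by
    by_contra hf
    refine hP.not_isNonnegRelation hR f ⟨Finsupp.support_onFinset_subset, fun x => ?_, hf, ?_⟩
    · simp only [f, Finsupp.onFinset_apply]
      split_ifs
      exacts [hc x, le_rfl]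
    · simp only [f, Finsupp.linearCombination_apply, id_eq]
      rw [Finsupp.onFinset_sum (g := fun x a => a • x) _ fun _ => zero_smul ℝ _, ← hsum]
      exact Finset.sum_congr rfl fun x hx => by simp [hx]
  intro x hx
  simpa [f, hx] using DFunLike.congr_fun hf x

theorem rle_antisymm {α β : V} (hαβ : rle Rpos α β) (hβα : rle Rpos β α) : α = β := by
  obtain ⟨c, hc, hβ⟩ := hαβ
  obtain ⟨d, hd, hα⟩ := hβα
  have hcd := hP.eq_zero_of_sum_smul_eq_zero hR (c := c + d) (fun x => add_nonneg (hc x) (hd x))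
    (by simp only [Pi.add_apply, add_smul, Finset.sum_add_distrib, ← hα, ← hβ]; abel)
  simp only [Pi.add_apply] at hcd
  have hc0 : ∀ x ∈ Rpos, c x = 0 := fun x hx => by linarith [hcd x hx, hc x, hd x]
  rw [Finset.sum_eq_zero fun x hx => by rw [hc0 x hx, zero_smul], sub_eq_zero] at hβ
  exact hβ.symm

theorem _root_.IsMaxIn.eq_of_rle {S : Set V} {α β : V} (hα : IsMaxIn Rpos S α) (hβ : β ∈ S)
    (h : rle Rpos α β) : β = α :=
  hP.rle_antisymm hR (hα.2 β hβ h) h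

theorem inner_eq_zero_of_isMaxIn {S : Set V} (hSsub : S ⊆ Rpos)
    (hSadd : ∀ x ∈ S, ∀ y ∈ S, x + y ∈ Rpos → x + y ∈ S) {α β : V} (hα : IsMaxIn Rpos S α)
    (hβ : IsMaxIn Rpos S β) (hne : α ≠ β) : ⟪α, β⟫ = 0 := by
  have hαR := hSsub hα.1
  have hβR := hSsub hβ.1
  rcases lt_trichotomy ⟪α, β⟫ 0 with hlt | h0 | hgt
  · have hsum := hP.add_mem_of_inner_neg hR hαR hβR hlt
    have := hα.eq_of_rle hR hP (hSadd α hα.1 β hβ.1 hsum) (rle_of_sub_mem (by simpa using hβR))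
    exact (hR.ne_zero (add_eq_left.1 this ▸ hP.subset hβR)).elim
  · exact h0
  · have hsub := hR.add_mem_of_inner_neg (hP.subset hαR) (hR.neg_mem (hP.subset hβR))
      (neg_injective.ne hne.symm) (by rwa [inner_neg_right, neg_lt_zero])
    rcases hP.mem_or_neg_mem _ hsub with h | h
    · exact absurd (hβ.eq_of_rle hR hP hα.1 (rle_of_sub_mem (by simpa [sub_eq_add_neg] using h)))
        hne
    · exact absurd (hα.eq_of_rle hR hP hβ.1 (rle_of_sub_mem (by simpa [sub_eq_add_neg] using h)))
        hne.symm

end IsPositiveSystem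

theorem mem_cascadeLevel {Rpos : Finset V} {n : ℕ} {α : V} :
    α ∈ cascadeLevel Rpos n ↔
      IsMaxIn Rpos {β | β ∈ Rpos ∧ ∀ m < n, ∀ γ ∈ cascadeLevel Rpos m, ⟪γ, β⟫ = 0} α := by
  rw [cascadeLevel]
  rfl

theorem inner_eq_zero_of_mem_cascadeLevel {R Rpos : Finset V} (hR : IsRootSystem R)
    (hP : IsPositiveSystem R Rpos) {m n : ℕ} {α β : V} (hα : α ∈ cascadeLevel Rpos m)
    (hβ : β ∈ cascadeLevel Rpos n) (hne : α ≠ β) : ⟪α, β⟫ = 0 := by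
  rcases lt_trichotomy m n with h | rfl | h
  · exact (mem_cascadeLevel.1 hβ).1.2 m h α hα
  · refine hP.inner_eq_zero_of_isMaxIn hR (fun x hx => hx.1) ?_ (mem_cascadeLevel.1 hα)
      (mem_cascadeLevel.1 hβ) hne
    intro x hx y hy hxy
    exact ⟨hxy, fun k hk γ hγ => by rw [inner_add_right, hx.2 k hk γ hγ, hy.2 k hk γ hγ, add_zero]⟩
  · rw [real_inner_comm]
    exact (mem_cascadeLevel.1 hα).1.2 n h β hβ

end

theorem cascade_pairwise_orthogonal_general
    {R Rpos : Finset V} (hR : IsRootSystem R) (hP : IsPositiveSystem R Rpos) :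
    ∀ α ∈ cascade Rpos, ∀ α' ∈ cascade Rpos, α ≠ α' →
      2 * ⟪α', α⟫ / ⟪α', α'⟫ = 0 := by
  intro α hα α' hα' hne
  obtain ⟨m, hm⟩ := Set.mem_iUnion.1 hα
  obtain ⟨n, hn⟩ := Set.mem_iUnion.1 hα'
  rw [inner_eq_zero_of_mem_cascadeLevel hR hP hn hm hne.symm, mul_zero, zero_div]

/-- If `-1` lies in the Weyl group of the root system `R`, then any two distinct roots
`α, α'` of Kostant's cascade satisfy `⟨α'^∨, α⟩ = 0`. -/
theorem cascade_pairwise_orthogonal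
    {R Rpos : Finset V} (hR : IsRootSystem R) (hP : IsPositiveSystem R Rpos)
    (hneg : (LinearIsometryEquiv.neg ℝ : V ≃ₗᵢ[ℝ] V) ∈ weylGroup R) :
    ∀ α ∈ cascade Rpos, ∀ α' ∈ cascade Rpos, α ≠ α' →
      2 * ⟪α', α⟫ / ⟪α', α'⟫ = 0 :=
  cascade_pairwise_orthogonal_general hR hP
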